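/- Suppose σ_1 > p − 1 and σ_2 > q − 1. Then there exists a constant ξ_1 > 0 (depending only on p, q, σ_1, σ_2 and β) such that the sequences {w^k} and {w̃^k} generated by GS-ADMM satisfy, for every k: ‖w^k − w̃^k‖_G² ≥ ξ_1(Σ_{i=1}^p‖A_i(x_i^k − x_i^{k+1})‖² + Σ_{j=1}^q‖B_j(y_j^k − y_j^{k+1})‖²) + (1−τ)β‖B(y^k − y^{k+1})‖² + (2−τ−s)β‖Ax^{k+1} + By^{k+1} − c‖² + 2(1−τ)β⟨Ax^{k+1} + By^{k+1} − c, B(y^k − y^{k+1})⟩, where B(y^k − y^{k+1}) = Σ_{j=1}^q B_j(y_j^k − y_j^{k+1}). -/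

import Mathlib

open scoped RealInnerProductSpace
open Matrix Filter

/-- Multiplication of a matrix with a vector, viewed as a map between Euclidean spaces. -/
noncomputable def mv {n m : ℕ} (M : Matrix (Fin n) (Fin m) ℝ)
    (v : EuclideanSpace ℝ (Fin m)) : EuclideanSpace ℝ (Fin n) :=
  WithLp.toLp 2 (M.mulVec v)

/-- `sA A x = Σ_i A_i x_i`. -/
noncomputable def sA {p n : ℕ} {m : Fin p → ℕ}
    (A : ∀ i, Matrix (Fin n) (Fin (m i)) ℝ)
    (x : ∀ i, EuclideanSpace ℝ (Fin (m i))) : EuclideanSpace ℝ (Fin n) :=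
  ∑ i, mv (A i) (x i)

/-- The augmented Lagrangian
`L_β(x,y,λ) = Σ_i f_i(x_i) + Σ_j g_j(y_j) − ⟨λ, Ax + By − c⟩ + (β/2)‖Ax + By − c‖²`. -/
noncomputable def Lag {p q n : ℕ} {m : Fin p → ℕ} {d : Fin q → ℕ}
    (A : ∀ i, Matrix (Fin n) (Fin (m i)) ℝ)
    (B : ∀ j, Matrix (Fin n) (Fin (d j)) ℝ)
    (c : EuclideanSpace ℝ (Fin n))
    (f : ∀ i, EuclideanSpace ℝ (Fin (m i)) → ℝ)
    (g : ∀ j, EuclideanSpace ℝ (Fin (d j)) → ℝ)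
    (β : ℝ)
    (x : ∀ i, EuclideanSpace ℝ (Fin (m i)))
    (y : ∀ j, EuclideanSpace ℝ (Fin (d j)))
    (lam : EuclideanSpace ℝ (Fin n)) : ℝ :=
  (∑ i, f i (x i)) + (∑ j, g j (y j)) - ⟪lam, sA A x + sA B y - c⟫
    + β / 2 * ‖sA A x + sA B y - c‖ ^ 2

/-- The `H`-quadratic form `‖(x,y,λ)‖_H²`. -/
noncomputable def Hform {p q n : ℕ} {m : Fin p → ℕ} {d : Fin q → ℕ}
    (A : ∀ i, Matrix (Fin n) (Fin (m i)) ℝ)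
    (B : ∀ j, Matrix (Fin n) (Fin (d j)) ℝ)
    (β σ1 σ2 τ s : ℝ)
    (x : ∀ i, EuclideanSpace ℝ (Fin (m i)))
    (y : ∀ j, EuclideanSpace ℝ (Fin (d j)))
    (lam : EuclideanSpace ℝ (Fin n)) : ℝ :=
  β * ((σ1 + 1) * (∑ i, ‖mv (A i) (x i)‖ ^ 2) - ‖sA A x‖ ^ 2)
    + (σ2 + 1) * β * (∑ j, ‖mv (B j) (y j)‖ ^ 2)
    - τ * s / (τ + s) * β * ‖sA B y‖ ^ 2
    - 2 * τ / (τ + s) * ⟪sA B y, lam⟫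
    + 1 / (β * (τ + s)) * ‖lam‖ ^ 2

/-- The `G`-quadratic form `‖(x,y,λ)‖_G²`. -/
noncomputable def Gform {p q n : ℕ} {m : Fin p → ℕ} {d : Fin q → ℕ}
    (A : ∀ i, Matrix (Fin n) (Fin (m i)) ℝ)
    (B : ∀ j, Matrix (Fin n) (Fin (d j)) ℝ)
    (β σ1 σ2 τ s : ℝ)
    (x : ∀ i, EuclideanSpace ℝ (Fin (m i)))
    (y : ∀ j, EuclideanSpace ℝ (Fin (d j)))
    (lam : EuclideanSpace ℝ (Fin n)) : ℝ :=
  β * ((σ1 + 1) * (∑ i, ‖mv (A i) (x i)‖ ^ 2) - ‖sA A x‖ ^ 2)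
    + (σ2 + 1) * β * (∑ j, ‖mv (B j) (y j)‖ ^ 2)
    - s * β * ‖sA B y‖ ^ 2
    + 2 * (s - 1) * ⟪sA B y, lam⟫
    + (2 - τ - s) / β * ‖lam‖ ^ 2

/-- The `H_y`-quadratic form `‖y‖_{H_y}² = β[(σ₂+1)Σ_j‖B_j y_j‖² − ‖By‖²]`. -/
noncomputable def Hyform {q n : ℕ} {d : Fin q → ℕ}
    (B : ∀ j, Matrix (Fin n) (Fin (d j)) ℝ)
    (β σ2 : ℝ)
    (y : ∀ j, EuclideanSpace ℝ (Fin (d j))) : ℝ :=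
  β * ((σ2 + 1) * (∑ j, ‖mv (B j) (y j)‖ ^ 2) - ‖sA B y‖ ^ 2)

/-
Since `λ^k − λ̃^k = β(r + B(y^k − y^{k+1}))` with `r = Ax^{k+1} + By^{k+1} − c`, expanding the
`G`-form splits it as `‖x^k − x^{k+1}‖_{H_x}² + ‖y^k − y^{k+1}‖_{H_y}²` (where `H_x` is `Hyform A`)
plus exactly the three residual terms of the bound. Cauchy–Schwarz gives
`‖Σ_j B_j y_j‖² ≤ q Σ_j ‖B_j y_j‖²`, so the `H_y`-form dominates `β(σ₂ + 1 − q) Σ_j ‖B_j y_j‖²`,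
and likewise for `H_x`; both factors are positive when `σ₁ > p − 1` and `σ₂ > q − 1`.
-/

theorem norm_sum_sq_le_card_mul_sum_norm_sq {E ι : Type*} [SeminormedAddCommGroup E]
    [Fintype ι] (u : ι → E) :
    ‖∑ i, u i‖ ^ 2 ≤ Fintype.card ι * ∑ i, ‖u i‖ ^ 2 :=
  calc ‖∑ i, u i‖ ^ 2 ≤ (∑ i, ‖u i‖) ^ 2 := by gcongr; exact norm_sum_le _ _
    _ ≤ Fintype.card ι * ∑ i, ‖u i‖ ^ 2 := sq_sum_le_card_mul_sum_sq

theorem sA_sub {p n : ℕ} {m : Fin p → ℕ} (A : ∀ i, Matrix (Fin n) (Fin (m i)) ℝ)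
    (x x' : ∀ i, EuclideanSpace ℝ (Fin (m i))) :
    sA A (fun i => x i - x' i) = sA A x - sA A x' := by
  simp only [sA, mv, ← Finset.sum_sub_distrib, ← WithLp.toLp_sub, WithLp.ofLp_sub,
    Matrix.mulVec_sub]

theorem mul_sum_norm_sq_le_Hyform {q n : ℕ} {d : Fin q → ℕ}
    (B : ∀ j, Matrix (Fin n) (Fin (d j)) ℝ) {β : ℝ} (hβ : 0 ≤ β) (σ2 : ℝ)
    (y : ∀ j, EuclideanSpace ℝ (Fin (d j))) :
    β * (σ2 + 1 - q) * ∑ j, ‖mv (B j) (y j)‖ ^ 2 ≤ Hyform B β σ2 y := by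
  have hcs : ‖sA B y‖ ^ 2 ≤ q * ∑ j, ‖mv (B j) (y j)‖ ^ 2 := by
    simpa [sA] using norm_sum_sq_le_card_mul_sum_norm_sq fun j => mv (B j) (y j)
  unfold Hyform
  nlinarith [mul_le_mul_of_nonneg_left hcs hβ]

theorem Gform_smul_add {p q n : ℕ} {m : Fin p → ℕ} {d : Fin q → ℕ}
    (A : ∀ i, Matrix (Fin n) (Fin (m i)) ℝ) (B : ∀ j, Matrix (Fin n) (Fin (d j)) ℝ)
    {β : ℝ} (hβ : β ≠ 0) (σ1 σ2 τ s : ℝ)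
    (x : ∀ i, EuclideanSpace ℝ (Fin (m i))) (y : ∀ j, EuclideanSpace ℝ (Fin (d j)))
    (r : EuclideanSpace ℝ (Fin n)) :
    Gform A B β σ1 σ2 τ s x y (β • (r + sA B y))
      = Hyform A β σ1 x + Hyform B β σ2 y + (1 - τ) * β * ‖sA B y‖ ^ 2
        + (2 - τ - s) * β * ‖r‖ ^ 2 + 2 * (1 - τ) * β * ⟪r, sA B y⟫ := by
  have hinner : ⟪sA B y, β • (r + sA B y)⟫ = β * (⟪r, sA B y⟫ + ‖sA B y‖ ^ 2) := by
    rw [real_inner_smul_right, inner_add_right, real_inner_comm, real_inner_self_eq_norm_sq]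
  have hnorm : ‖β • (r + sA B y)‖ ^ 2 = β ^ 2 * (‖r‖ ^ 2 + 2 * ⟪r, sA B y⟫ + ‖sA B y‖ ^ 2) := by
    rw [norm_smul, mul_pow, Real.norm_eq_abs, sq_abs, norm_add_sq_real]
  unfold Gform Hyform
  rw [hinner, hnorm]
  field_simp
  ring

theorem stmt9_general
    {p q n : ℕ}
    {m : Fin p → ℕ} {d : Fin q → ℕ}
    (A : ∀ i, Matrix (Fin n) (Fin (m i)) ℝ)
    (B : ∀ j, Matrix (Fin n) (Fin (d j)) ℝ)
    (c : EuclideanSpace ℝ (Fin n))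
    (β σ1 σ2 τ s : ℝ) (hβ : 0 < β)
    (x : ℕ → ∀ i, EuclideanSpace ℝ (Fin (m i)))
    (y : ℕ → ∀ j, EuclideanSpace ℝ (Fin (d j)))
    (lam : ℕ → EuclideanSpace ℝ (Fin n))
    (hσ1 : (p : ℝ) - 1 < σ1) (hσ2 : (q : ℝ) - 1 < σ2) :
    ∃ ξ1 : ℝ, 0 < ξ1 ∧ ∀ k : ℕ,
      Gform A B β σ1 σ2 τ s (fun i => x k i - x (k+1) i)
          (fun j => y k j - y (k+1) j)
          (lam k - (lam k - β • (sA A (x (k+1)) + sA B (y k) - c)))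
        ≥ ξ1 * ((∑ i, ‖mv (A i) (x k i - x (k+1) i)‖ ^ 2)
              + ∑ j, ‖mv (B j) (y k j - y (k+1) j)‖ ^ 2)
          + (1 - τ) * β * ‖sA B (fun j => y k j - y (k+1) j)‖ ^ 2
          + (2 - τ - s) * β * ‖sA A (x (k+1)) + sA B (y (k+1)) - c‖ ^ 2
          + 2 * (1 - τ) * β *
            ⟪sA A (x (k+1)) + sA B (y (k+1)) - c,
              sA B (fun j => y k j - y (k+1) j)⟫ := by
  set κ := min (σ1 + 1 - p) (σ2 + 1 - q)
  refine ⟨β * κ, mul_pos hβ (lt_min (by linarith) (by linarith)), fun k => ?_⟩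
  have hdual : lam k - (lam k - β • (sA A (x (k+1)) + sA B (y k) - c))
      = β • ((sA A (x (k+1)) + sA B (y (k+1)) - c) + sA B fun j => y k j - y (k+1) j) := by
    rw [sub_sub_cancel, sA_sub]
    abel_nf
  rw [hdual, Gform_smul_add A B hβ.ne']
  have hx := mul_sum_norm_sq_le_Hyform A hβ.le σ1 fun i => x k i - x (k+1) i
  have hy := mul_sum_norm_sq_le_Hyform B hβ.le σ2 fun j => y k j - y (k+1) j
  have hκx : β * κ ≤ β * (σ1 + 1 - p) := by gcongr; exact min_le_left _ _
  have hκy : β * κ ≤ β * (σ2 + 1 - q) := by gcongr; exact min_le_right _ _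
  have hSx : 0 ≤ ∑ i, ‖mv (A i) (x k i - x (k+1) i)‖ ^ 2 := by positivity
  have hSy : 0 ≤ ∑ j, ‖mv (B j) (y k j - y (k+1) j)‖ ^ 2 := by positivity
  nlinarith [mul_le_mul_of_nonneg_right hκx hSx, mul_le_mul_of_nonneg_right hκy hSy]

/-- first lower bound for `‖w^k − w̃^k‖_G²`. -/
theorem stmt9
    {p q n : ℕ} (hp : 1 ≤ p) (hq : 1 ≤ q)
    {m : Fin p → ℕ} {d : Fin q → ℕ}
    (A : ∀ i, Matrix (Fin n) (Fin (m i)) ℝ)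
    (B : ∀ j, Matrix (Fin n) (Fin (d j)) ℝ)
    (hA : ∀ i, LinearIndependent ℝ (fun l => (A i)ᵀ l))
    (hB : ∀ j, LinearIndependent ℝ (fun l => (B j)ᵀ l))
    (c : EuclideanSpace ℝ (Fin n))
    (X : ∀ i, Set (EuclideanSpace ℝ (Fin (m i))))
    (Y : ∀ j, Set (EuclideanSpace ℝ (Fin (d j))))
    (hXne : ∀ i, (X i).Nonempty) (hXcl : ∀ i, IsClosed (X i)) (hXcv : ∀ i, Convex ℝ (X i))
    (hYne : ∀ j, (Y j).Nonempty) (hYcl : ∀ j, IsClosed (Y j)) (hYcv : ∀ j, Convex ℝ (Y j))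
    (f : ∀ i, EuclideanSpace ℝ (Fin (m i)) → ℝ)
    (g : ∀ j, EuclideanSpace ℝ (Fin (d j)) → ℝ)
    (hf : ∀ i, ConvexOn ℝ Set.univ (f i))
    (hg : ∀ j, ConvexOn ℝ Set.univ (g j))
    (β σ1 σ2 τ s : ℝ) (hβ : 0 < β)
    (x : ℕ → ∀ i, EuclideanSpace ℝ (Fin (m i)))
    (y : ℕ → ∀ j, EuclideanSpace ℝ (Fin (d j)))
    (lam lamh : ℕ → EuclideanSpace ℝ (Fin n))
    (hxmin : ∀ k i, x (k+1) i ∈ X i ∧ ∀ z ∈ X i,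
      Lag A B c f g β (Function.update (x k) i (x (k+1) i)) (y k) (lam k)
          + σ1 * β / 2 * ‖mv (A i) (x (k+1) i - x k i)‖ ^ 2
        ≤ Lag A B c f g β (Function.update (x k) i z) (y k) (lam k)
          + σ1 * β / 2 * ‖mv (A i) (z - x k i)‖ ^ 2)
    (hlamh : ∀ k, lamh k = lam k - (τ * β) • (sA A (x (k+1)) + sA B (y k) - c))
    (hymin : ∀ k j, y (k+1) j ∈ Y j ∧ ∀ z ∈ Y j,
      Lag A B c f g β (x (k+1)) (Function.update (y k) j (y (k+1) j)) (lamh k)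
          + σ2 * β / 2 * ‖mv (B j) (y (k+1) j - y k j)‖ ^ 2
        ≤ Lag A B c f g β (x (k+1)) (Function.update (y k) j z) (lamh k)
          + σ2 * β / 2 * ‖mv (B j) (z - y k j)‖ ^ 2)
    (hlam : ∀ k, lam (k+1) = lamh k - (s * β) • (sA A (x (k+1)) + sA B (y (k+1)) - c))
    (hσ1 : (p : ℝ) - 1 < σ1) (hσ2 : (q : ℝ) - 1 < σ2) :
    ∃ ξ1 : ℝ, 0 < ξ1 ∧ ∀ k : ℕ,
      Gform A B β σ1 σ2 τ s (fun i => x k i - x (k+1) i)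
          (fun j => y k j - y (k+1) j)
          (lam k - (lam k - β • (sA A (x (k+1)) + sA B (y k) - c)))
        ≥ ξ1 * ((∑ i, ‖mv (A i) (x k i - x (k+1) i)‖ ^ 2)
              + ∑ j, ‖mv (B j) (y k j - y (k+1) j)‖ ^ 2)
          + (1 - τ) * β * ‖sA B (fun j => y k j - y (k+1) j)‖ ^ 2
          + (2 - τ - s) * β * ‖sA A (x (k+1)) + sA B (y (k+1)) - c‖ ^ 2
          + 2 * (1 - τ) * β *
            ⟪sA A (x (k+1)) + sA B (y (k+1)) - c,
              sA B (fun j => y k j - y (k+1) j)⟫ :=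
  stmt9_general A B c β σ1 σ2 τ s hβ x y lam hσ1 hσ2
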